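/- arXiv:1808.04304 — 2 statements merged into one kernel-verified Lean document; each statement's English description precedes it below -/
import Mathlib

section
/- For every natural number n and every k strictly less than the length of digits(n), the value of the prefix consisting of the first k digits, val(take k (digits n)), is an even natural number (i.e., it equals an even nonnegative integer when viewed in ℚ). -/
def digits : ℕ → List ℕ
  | 0 => []
  | n + 1 => digits (2 * ((n + 1) / 3)) ++ [(n + 1) % 3]
decreasing_by omega

def val (L : List ℕ) : ℚ := L.foldl (fun acc d => 3/2 * acc + d) 0

lemma val_append_single (L : List ℕ) (d : ℕ) :
    val (L ++ [d]) = 3/2 * val L + d := by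
  simp [val, List.foldl_append]

lemma val_digits : ∀ n : ℕ, val (digits n) = n := by
  intro n
  induction n using Nat.strong_induction_on with
  | _ n ih =>
    match n with
    | 0 => simp [digits, val]
    | m + 1 =>
      rw [digits, val_append_single, ih (2 * ((m + 1) / 3)) (by omega)]
      have key : (m + 1) % 3 + 3 * ((m + 1) / 3) = m + 1 := by omega
      have key' := congrArg (Nat.cast : ℕ → ℚ) key
      push_cast at key' ⊢
      linarith

theorem prefix_even (n k : ℕ) (hk : k < (digits n).length) :
    ∃ m : ℕ, Even m ∧ val (List.take k (digits n)) = m := by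
  induction n using Nat.strong_induction_on generalizing k with
  | _ n ih =>
    match n with
    | 0 => simp [digits] at hk
    | m + 1 =>
      rw [digits] at hk ⊢
      simp only [List.length_append, List.length_singleton] at hk
      rw [List.take_append_of_le_length (by omega)]
      rcases lt_or_eq_of_le (Nat.lt_succ_iff.mp hk) with h | h
      · exact ih (2 * ((m + 1) / 3)) (by omega) k h
      · refine ⟨2 * ((m + 1) / 3), even_two_mul _, ?_⟩
        rw [h, List.take_length, val_digits]
end

section
/- For positive natural numbers x ≥ y whose base-3/2 representations each have at least k digits, the last k digits of digits(x) and digits(y) coincide if and only if 3^k divides x − y. -/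
lemma digits_pos (n : ℕ) (hn : 0 < n) :
    digits n = digits (2 * (n / 3)) ++ [n % 3] := by
  cases n with
  | zero => omega
  | succ m => rw [digits]

lemma dvd_two_mul_iff (k d : ℕ) : 3 ^ k ∣ 2 * d ↔ 3 ^ k ∣ d := by
  constructor
  · intro h
    exact (Nat.Coprime.pow_left k (by decide : Nat.Coprime 3 2)).dvd_of_dvd_mul_left h
  · exact fun h => h.mul_left 2

lemma step_arith (k x y : ℕ) (hxy : y ≤ x) :
    (3 ^ k ∣ x / 3 - y / 3 ∧ x % 3 = y % 3) ↔ 3 ^ (k + 1) ∣ x - y := by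
  constructor
  · rintro ⟨⟨c, hc⟩, hm⟩
    refine ⟨c, ?_⟩
    have h1 : x - y = 3 * (x / 3 - y / 3) := by omega
    rw [h1, hc]; ring
  · rintro ⟨c, hc⟩
    have hc' : x - y = 3 * (3 ^ k * c) := by rw [hc]; ring
    have h1 : x / 3 - y / 3 = 3 ^ k * c := by omega
    have h2 : x % 3 = y % 3 := by omega
    exact ⟨⟨c, h1⟩, h2⟩

lemma aux : ∀ k x y : ℕ, y ≤ x → k ≤ (digits x).length → k ≤ (digits y).length →
    (List.drop ((digits x).length - k) (digits x) =
      List.drop ((digits y).length - k) (digits y) ↔ 3 ^ k ∣ x - y) := by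
  intro k
  induction k with
  | zero =>
    intro x y _ _ _
    simp [List.drop_length]
  | succ k ih =>
    intro x y hxy hx hyk
    have hy0 : 0 < y := by
      by_contra h
      have : y = 0 := by omega
      subst this
      simp [digits] at hyk
    have hx0 : 0 < x := lt_of_lt_of_le hy0 hxy
    rw [digits_pos x hx0] at hx ⊢
    rw [digits_pos y hy0] at hyk ⊢
    simp only [List.length_append, List.length_singleton] at hx hyk ⊢
    have hkx : k ≤ (digits (2 * (x / 3))).length := by omega
    have hky : k ≤ (digits (2 * (y / 3))).length := by omega
    have e1 : (digits (2 * (x / 3))).length + 1 - (k + 1)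
        = (digits (2 * (x / 3))).length - k := by omega
    have e2 : (digits (2 * (y / 3))).length + 1 - (k + 1)
        = (digits (2 * (y / 3))).length - k := by omega
    rw [e1, e2,
      List.drop_append_of_le_length (by omega),
      List.drop_append_of_le_length (by omega)]
    have ihh := ih (2 * (x / 3)) (2 * (y / 3))
      (by have := Nat.div_le_div_right (c := 3) hxy; omega) hkx hky
    rw [← step_arith k x y hxy]
    constructor
    · intro h
      have h1 := List.append_inj' h rfl
      have h2 := ihh.mp h1.1
      have h3 : x % 3 = y % 3 := by simpa using h1.2
      have h4 : 2 * (x / 3) - 2 * (y / 3) = 2 * (x / 3 - y / 3) := by omega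
      rw [h4, dvd_two_mul_iff] at h2
      exact ⟨h2, h3⟩
    · rintro ⟨h1, h2⟩
      have h4 : 2 * (x / 3) - 2 * (y / 3) = 2 * (x / 3 - y / 3) := by omega
      have h5 : 3 ^ k ∣ 2 * (x / 3) - 2 * (y / 3) := by
        rw [h4, dvd_two_mul_iff]; exact h1
      rw [ihh.mpr h5, h2]

theorem last_digits_cycle (x y k : ℕ) (hy : 0 < y) (hxy : y ≤ x)
    (hx : k ≤ (digits x).length) (hyk : k ≤ (digits y).length) :
    List.drop ((digits x).length - k) (digits x) =
      List.drop ((digits y).length - k) (digits y) ↔ 3 ^ k ∣ x - y :=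
  aux k x y hxy hx hyk
end
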